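/- Let A ⊆ ℝᵈ be nonempty, closed and convex, M : ℝᵈ → ℝᵈ monotone and continuous with SOL(A, M) nonempty, and let ε(t) ↓ 0. Then the Tikhonov sequence y(t) ∈ SOL(A, M + ε(t)·Id) converges to the least-norm element of SOL(A, M). -/

import Mathlib

/-!
Testing the regularized inequality at `a⋆` and the original one at `y t`, monotonicity of `M`
leaves `ε t ⟪y t, a⋆ - y t⟫ ≥ 0`. Hence `‖y t‖ ≤ ‖a⋆‖`, so the sequence is bounded. Every
cluster point `x` solves the unregularized inequality (continuity of `M`, `ε t → 0`) and still
satisfies `⟪x, a⋆ - x⟫ ≥ 0`; together with `‖a⋆‖ ≤ ‖x‖` this forces `x = a⋆`.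
-/

open RealInnerProductSpace Filter Topology

section VariationalInequality

variable {E : Type*} [NormedAddCommGroup E] [InnerProductSpace ℝ E]

/-- `SOL(A, F)`: the solutions of the variational inequality of `F` over `A`. -/
def viSol (A : Set E) (F : E → E) : Set E :=
  {x ∈ A | ∀ z ∈ A, 0 ≤ ⟪F x, z - x⟫}

theorem inner_sub_nonneg_of_mem_viSol_tikhonov {A : Set E} {M : E → E}
    (hmono : ∀ x ∈ A, ∀ y ∈ A, 0 ≤ ⟪M x - M y, x - y⟫) {ε : ℝ} (hε : 0 < ε) {y a : E}
    (hy : y ∈ viSol A (fun v => M v + ε • v)) (ha : a ∈ viSol A M) :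
    0 ≤ ⟪y, a - y⟫ := by
  have hreg := hy.2 a ha.1
  have hsol := ha.2 y hy.1
  have hmon := hmono y hy.1 a ha.1
  rw [inner_add_left, real_inner_smul_left] at hreg
  rw [inner_sub_left] at hmon
  have hflip : ⟪M y, a - y⟫ = -⟪M y, y - a⟫ := by
    rw [← inner_neg_right, neg_sub]
  have : 0 ≤ ε * ⟪y, a - y⟫ := by linarith
  exact nonneg_of_mul_nonneg_right this hε

theorem norm_le_of_inner_sub_nonneg {y a : E} (h : 0 ≤ ⟪y, a - y⟫) : ‖y‖ ≤ ‖a‖ := by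
  rw [inner_sub_right, real_inner_self_eq_norm_sq] at h
  nlinarith [real_inner_le_norm y a, norm_nonneg y, norm_nonneg a]

theorem eq_of_inner_sub_nonneg_of_norm_le {x a : E} (h : 0 ≤ ⟪x, a - x⟫) (hn : ‖a‖ ≤ ‖x‖) :
    x = a := by
  rw [inner_sub_right, real_inner_self_eq_norm_sq] at h
  have : ‖x - a‖ ^ 2 ≤ 0 := by
    rw [norm_sub_sq_real]
    nlinarith [norm_nonneg a]
  rw [← sub_eq_zero, ← norm_eq_zero]
  nlinarith [norm_nonneg (x - a)]

theorem mem_viSol_of_tendsto {ι : Type*} {l : Filter ι} [l.NeBot] {A : Set E}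
    (hA : IsClosed A) {M : E → E} (hM : ContinuousOn M A) {ε : ι → ℝ}
    (hε : Tendsto ε l (𝓝 0)) {y : ι → E} {x : E} (hyx : Tendsto y l (𝓝 x))
    (hy : ∀ i, y i ∈ viSol A (fun v => M v + ε i • v)) : x ∈ viSol A M := by
  have hxA : x ∈ A := hA.mem_of_tendsto hyx (.of_forall fun i => (hy i).1)
  have hMyx : Tendsto (fun i => M (y i)) l (𝓝 (M x)) :=
    (hM x hxA).tendsto.comp
      (tendsto_nhdsWithin_of_tendsto_nhds_of_eventually_within _ hyx
        (.of_forall fun i => (hy i).1))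
  refine ⟨hxA, fun z hz => ge_of_tendsto' (x := l) ?_ fun i => (hy i).2 z hz⟩
  simpa using (hMyx.add (hε.smul hyx)).inner (tendsto_const_nhds.sub hyx)

end VariationalInequality

theorem stmt_8_general {d : ℕ} (A : Set (EuclideanSpace ℝ (Fin d)))
    (hA_closed : IsClosed A)
    (M : EuclideanSpace ℝ (Fin d) → EuclideanSpace ℝ (Fin d))
    (hcont : ContinuousOn M A)
    (hmono : ∀ x ∈ A, ∀ y ∈ A, 0 ≤ ⟪M x - M y, x - y⟫)
    (ε : ℕ → ℝ) (hεpos : ∀ t, 0 < ε t)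
    (hεlim : Filter.Tendsto ε Filter.atTop (nhds 0))
    (y : ℕ → EuclideanSpace ℝ (Fin d))
    (hy : ∀ t, y t ∈ A ∧ ∀ z ∈ A, 0 ≤ ⟪M (y t) + ε t • y t, z - y t⟫)
    (astar : EuclideanSpace ℝ (Fin d)) (hastar : astar ∈ A)
    (hasol : ∀ z ∈ A, 0 ≤ ⟪M astar, z - astar⟫)
    (hleast : ∀ x ∈ A, (∀ z ∈ A, 0 ≤ ⟪M x, z - x⟫) → ‖astar‖ ≤ ‖x‖) :
    Filter.Tendsto y Filter.atTop (nhds astar) := by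
  have hkey : ∀ t, 0 ≤ ⟪y t, astar - y t⟫ := fun t =>
    inner_sub_nonneg_of_mem_viSol_tikhonov hmono (hεpos t) (hy t) ⟨hastar, hasol⟩
  have hball : ∀ᶠ t in atTop, y t ∈ Metric.closedBall 0 ‖astar‖ := .of_forall fun t => by
    simpa using norm_le_of_inner_sub_nonneg (hkey t)
  refine (isCompact_closedBall _ _).tendsto_nhds_of_unique_mapClusterPt hball
    fun x _ hx => ?_
  obtain ⟨ψ, hψ, hyψ⟩ := hx.tendsto_subseq
  have hxsol : x ∈ viSol A M :=
    mem_viSol_of_tendsto hA_closed hcont (hεlim.comp hψ.tendsto_atTop) hyψ fun n => hy (ψ n)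
  have hxkey : 0 ≤ ⟪x, astar - x⟫ :=
    ge_of_tendsto' (hyψ.inner (tendsto_const_nhds.sub hyψ)) fun n => hkey (ψ n)
  exact eq_of_inner_sub_nonneg_of_norm_le hxkey (hleast x hxsol.1 hxsol.2)

theorem stmt_8 {d : ℕ} (A : Set (EuclideanSpace ℝ (Fin d)))
    (hA_ne : A.Nonempty) (hA_closed : IsClosed A) (hA_convex : Convex ℝ A)
    (M : EuclideanSpace ℝ (Fin d) → EuclideanSpace ℝ (Fin d))
    (hcont : ContinuousOn M A)
    (hmono : ∀ x ∈ A, ∀ y ∈ A, 0 ≤ ⟪M x - M y, x - y⟫)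
    (hSOL : ∃ x ∈ A, ∀ z ∈ A, 0 ≤ ⟪M x, z - x⟫)
    (ε : ℕ → ℝ) (hεpos : ∀ t, 0 < ε t) (hεanti : StrictAnti ε)
    (hεlim : Filter.Tendsto ε Filter.atTop (nhds 0))
    (y : ℕ → EuclideanSpace ℝ (Fin d))
    (hy : ∀ t, y t ∈ A ∧ ∀ z ∈ A, 0 ≤ ⟪M (y t) + ε t • y t, z - y t⟫)
    (astar : EuclideanSpace ℝ (Fin d)) (hastar : astar ∈ A)
    (hasol : ∀ z ∈ A, 0 ≤ ⟪M astar, z - astar⟫)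
    (hleast : ∀ x ∈ A, (∀ z ∈ A, 0 ≤ ⟪M x, z - x⟫) → ‖astar‖ ≤ ‖x‖) :
    Filter.Tendsto y Filter.atTop (nhds astar) :=
  stmt_8_general A hA_closed M hcont hmono ε hεpos hεlim y hy astar hastar hasol hleast
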